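/- arXiv:1209.1123 — 2 statements merged into one kernel-verified Lean document; each statement's English description precedes it below -/
import Mathlib

section
/- (Theorem 4: stabilizability as an exact model-matching problem.) Let (M, N, M̃, Ñ, X, Y, X̃, Ỹ) be a DCF of the strictly proper plant G ∈ F^{m×p} over Ω, and let the sparsity subspace S defined by K^bin be QI under G. Then there exists a controller in S that stabilizes G if and only if there exists a stable Q ∈ 𝔸^{p×m} such that (X̃·M̃ + M·Q·M̃) i j = 0 for every (i,j) with K^bin i j = false (equivalently, (M·X + M·Q·M̃) i j = 0 for every such (i,j), since M·X = X̃·M̃; this is the entrywise form of the exact model-matching equations Φ(Mᵀ⊗M̃)vec(Q) + Φ vec(X̃M̃) = 0 with Φ = I − diag(vec(K^bin))). Moreover, for any such Q, the controller K_Q belongs to S and stabilizes G. -/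
open Matrix

noncomputable section

/-- The field of real rational functions. -/
abbrev F : Type := RatFunc ℝ

/-- A rational function is stable (w.r.t. stability region `Ω`) if it is proper and
every complex root of the complexification of its reduced denominator lies in `Ω`. -/
def StableF (Ω : Set ℂ) (f : F) : Prop :=
  f.intDegree ≤ 0 ∧ ∀ z : ℂ, (f.denom.map (algebraMap ℝ ℂ)).IsRoot z → z ∈ Ω

/-- A matrix over `F` is stable if all its entries are stable. -/
def MatStable (Ω : Set ℂ) {a b : Type} (M : Matrix a b F) : Prop :=
  ∀ i j, StableF Ω (M i j)

/-- A matrix over `F` is strictly proper if every entry is `0` or has negative `intDegree`. -/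
def StrictlyProper {a b : Type} (G : Matrix a b F) : Prop :=
  ∀ i j, G i j = 0 ∨ (G i j).intDegree < 0

/-- A matrix over `F` is proper if every entry has nonpositive `intDegree`. -/
def ProperM {a b : Type} (K : Matrix a b F) : Prop :=
  ∀ i j, (K i j).intDegree ≤ 0

/-- `K` stabilizes `G` if `I + G*K` is invertible and the four closed-loop
transfer matrices are stable. -/
def Stabilizes (Ω : Set ℂ) {m p : ℕ} (G : Matrix (Fin m) (Fin p) F)
    (K : Matrix (Fin p) (Fin m) F) : Prop :=
  IsUnit (1 + G * K).det ∧
    MatStable Ω (1 + G * K)⁻¹ ∧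
    MatStable Ω ((1 + G * K)⁻¹ * G) ∧
    MatStable Ω (K * (1 + G * K)⁻¹) ∧
    MatStable Ω (1 + K * G)⁻¹

/-- A doubly coprime factorization of `G` over `Ω`. -/
structure IsDCF (Ω : Set ℂ) {m p : ℕ} (G : Matrix (Fin m) (Fin p) F)
    (M : Matrix (Fin p) (Fin p) F) (N : Matrix (Fin m) (Fin p) F)
    (Mt : Matrix (Fin m) (Fin m) F) (Nt : Matrix (Fin m) (Fin p) F)
    (X : Matrix (Fin p) (Fin m) F) (Y : Matrix (Fin p) (Fin p) F)
    (Xt : Matrix (Fin p) (Fin m) F) (Yt : Matrix (Fin m) (Fin m) F) : Prop where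
  stM : MatStable Ω M
  stN : MatStable Ω N
  stMt : MatStable Ω Mt
  stNt : MatStable Ω Nt
  stX : MatStable Ω X
  stY : MatStable Ω Y
  stXt : MatStable Ω Xt
  stYt : MatStable Ω Yt
  hM : IsUnit M.det
  hMt : IsUnit Mt.det
  hLeft : G = Mt⁻¹ * Nt
  hRight : G = N * M⁻¹
  bezout : Matrix.fromBlocks Y X (-Nt) Mt * Matrix.fromBlocks M (-Xt) N Yt = 1

/-- A left coprime factorization of `G` over `Ω`. -/
def IsLCF (Ω : Set ℂ) {m p : ℕ} (G : Matrix (Fin m) (Fin p) F)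
    (Mt : Matrix (Fin m) (Fin m) F) (Nt : Matrix (Fin m) (Fin p) F) : Prop :=
  MatStable Ω Mt ∧ MatStable Ω Nt ∧ IsUnit Mt.det ∧ G = Mt⁻¹ * Nt ∧
    ∃ Xt : Matrix (Fin p) (Fin m) F, ∃ Yt : Matrix (Fin m) (Fin m) F,
      MatStable Ω Xt ∧ MatStable Ω Yt ∧ Nt * Xt + Mt * Yt = 1

/-- A right coprime factorization of `G` over `Ω`. -/
def IsRCF (Ω : Set ℂ) {m p : ℕ} (G : Matrix (Fin m) (Fin p) F)
    (N : Matrix (Fin m) (Fin p) F) (M : Matrix (Fin p) (Fin p) F) : Prop :=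
  MatStable Ω N ∧ MatStable Ω M ∧ IsUnit M.det ∧ G = N * M⁻¹ ∧
    ∃ X : Matrix (Fin p) (Fin m) F, ∃ Y : Matrix (Fin p) (Fin p) F,
      MatStable Ω X ∧ MatStable Ω Y ∧ Y * M + X * N = 1

/-- Evaluation of a rational function at a complex point (complexified num/denom). -/
def evalC (z : ℂ) (f : F) : ℂ :=
  (f.num.map (algebraMap ℝ ℂ)).eval z / (f.denom.map (algebraMap ℝ ℂ)).eval z

/-!
Proper rational functions form the valuation ring of the place at infinity and strictly proper
ones its maximal ideal, so `det (1 - C) ≠ 0` whenever `C` is strictly proper. Since `N = G M` and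
`Ñ = M̃ G` are strictly proper, the Bezout relations `Y M = 1 - X N` and `M̃ Ỹ = 1 - Ñ X̃` make
`Y` and `Ỹ` invertible. The Youla substitution `Q ↦ (X_Q, Y_Q, X̃_Q, Ỹ_Q)` preserves the Bezout
identity, so `K_Q = Y_Q⁻¹ X_Q = X̃_Q Ỹ_Q⁻¹` stabilizes `G`, with closed loop
`(1 + G K_Q)⁻¹ = Ỹ_Q M̃` and `K_Q (1 + G K_Q)⁻¹ = X̃_Q M̃`; conversely every stabilizing `K` is
some `K_Q`.

Quadratic invariance gives `K (G K)ᵏ ∈ S` for all `k` by polarization, and `(1 + G K)⁻¹` is a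
polynomial in `G K` (it lies in the finite-dimensional algebra `𝕜[G K]`). Hence
`K ∈ S ↔ K (1 + G K)⁻¹ ∈ S`, which turns the constraint `K_Q ∈ S` into the affine constraint
`X̃ M̃ + M Q M̃ ∈ S` on `Q`.
-/

theorem RatFunc.inftyValuation_le_one_iff {K : Type*} [Field K] [DecidableEq (RatFunc K)]
    {f : RatFunc K} : inftyValuation K f ≤ 1 ↔ f.intDegree ≤ 0 := by
  rcases eq_or_ne f 0 with rfl | hf
  · simp
  · rw [inftyValuation_apply, inftyValuation_of_nonzero _ hf, ← WithZero.exp_zero,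
      WithZero.exp_le_exp]

theorem RatFunc.inftyValuation_lt_one_iff {K : Type*} [Field K] [DecidableEq (RatFunc K)]
    {f : RatFunc K} : inftyValuation K f < 1 ↔ f = 0 ∨ f.intDegree < 0 := by
  rcases eq_or_ne f 0 with rfl | hf
  · simp
  · rw [inftyValuation_apply, inftyValuation_of_nonzero _ hf, ← WithZero.exp_zero,
      WithZero.exp_lt_exp, or_iff_right hf]

theorem IsLocalRing.isUnit_det_one_add {R n : Type*} [CommRing R] [IsLocalRing R] [Fintype n]
    [DecidableEq n] {C : Matrix n n R} (hC : ∀ i j, C i j ∈ maximalIdeal R) :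
    IsUnit (1 + C).det := by
  have hC0 : (residue R).mapMatrix C = 0 := by
    ext i j; exact (residue_eq_zero_iff _).mpr (hC i j)
  rw [← residue_ne_zero_iff_isUnit, RingHom.map_det, map_add, map_one, hC0, add_zero, det_one]
  exact one_ne_zero

theorem Valuation.det_one_add_ne_zero {K Γ₀ n : Type*} [Field K]
    [LinearOrderedCommGroupWithZero Γ₀] [Fintype n] [DecidableEq n] (v : Valuation K Γ₀)
    {C : Matrix n n K} (hC : ∀ i j, v (C i j) < 1) : (1 + C).det ≠ 0 := by
  let C' : Matrix n n v.valuationSubring := fun i j => ⟨C i j, (hC i j).le⟩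
  have hunit : IsUnit (1 + C').det :=
    IsLocalRing.isUnit_det_one_add fun i j => v.mem_maximalIdeal_iff.mpr (hC i j)
  have hlift : v.valuationSubring.subtype.mapMatrix (1 + C') = 1 + C := by
    rw [map_add, map_one]; rfl
  rw [← hlift, ← RingHom.map_det]
  exact (hunit.map v.valuationSubring.subtype).ne_zero

section Properness

open scoped Classical
open RatFunc

variable {a b c : Type}

theorem strictlyProper_iff {A : Matrix a b F} :
    StrictlyProper A ↔ ∀ i j, inftyValuation ℝ (A i j) < 1 := by
  simp only [StrictlyProper, inftyValuation_lt_one_iff]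

theorem properM_iff {A : Matrix a b F} : ProperM A ↔ ∀ i j, inftyValuation ℝ (A i j) ≤ 1 := by
  simp only [ProperM, inftyValuation_le_one_iff]

theorem StrictlyProper.mul_properM [Fintype b] {A : Matrix a b F} {B : Matrix b c F}
    (hA : StrictlyProper A) (hB : ProperM B) : StrictlyProper (A * B) := by
  rw [strictlyProper_iff] at hA ⊢
  rw [properM_iff] at hB
  refine fun i j => Valuation.map_sum_lt _ one_ne_zero fun k _ => ?_
  rw [map_mul]
  exact mul_lt_one_of_nonneg_of_lt_one_left zero_le (hA i k) (hB k j)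

theorem ProperM.mul_strictlyProper [Fintype b] {A : Matrix a b F} {B : Matrix b c F}
    (hA : ProperM A) (hB : StrictlyProper B) : StrictlyProper (A * B) := by
  rw [strictlyProper_iff] at hB ⊢
  rw [properM_iff] at hA
  refine fun i j => Valuation.map_sum_lt _ one_ne_zero fun k _ => ?_
  rw [map_mul]
  exact mul_lt_one_of_nonneg_of_lt_one_right (hA i k) zero_le (hB k j)

theorem StrictlyProper.det_one_sub_ne_zero {n : Type} [Fintype n] [DecidableEq n]
    {C : Matrix n n F} (hC : StrictlyProper C) : (1 - C).det ≠ 0 := by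
  rw [sub_eq_add_neg]
  refine (inftyValuation ℝ).det_one_add_ne_zero fun i j => ?_
  rw [Matrix.neg_apply, Valuation.map_neg]
  exact strictlyProper_iff.mp hC i j

theorem stableF_of_denom_dvd_mul {Ω : Set ℂ} {f g h : F} (hf : StableF Ω f) (hg : StableF Ω g)
    (hh : inftyValuation ℝ h ≤ 1) (hd : h.denom ∣ f.denom * g.denom) : StableF Ω h := by
  refine ⟨inftyValuation_le_one_iff.mp hh, fun z hz => ?_⟩
  have hfg := hz.dvd (Polynomial.map_dvd (algebraMap ℝ ℂ) hd)
  rw [Polynomial.map_mul, Polynomial.IsRoot, Polynomial.eval_mul, mul_eq_zero] at hfg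
  exact hfg.elim (hf.2 z) (hg.2 z)

theorem StableF.add {Ω : Set ℂ} {f g : F} (hf : StableF Ω f) (hg : StableF Ω g) :
    StableF Ω (f + g) :=
  stableF_of_denom_dvd_mul hf hg
    (Valuation.map_add_le _ (inftyValuation_le_one_iff.mpr hf.1)
      (inftyValuation_le_one_iff.mpr hg.1))
    (denom_add_dvd f g)

theorem StableF.mul {Ω : Set ℂ} {f g : F} (hf : StableF Ω f) (hg : StableF Ω g) :
    StableF Ω (f * g) := by
  refine stableF_of_denom_dvd_mul hf hg ?_ (denom_mul_dvd f g)
  rw [map_mul]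
  exact mul_le_one' (inftyValuation_le_one_iff.mpr hf.1) (inftyValuation_le_one_iff.mpr hg.1)

theorem StableF.neg {Ω : Set ℂ} {f : F} (hf : StableF Ω f) : StableF Ω (-f) := by
  have hd : (-f).denom ∣ f.denom :=
    (denom_dvd f.denom_ne_zero).mpr ⟨-f.num, by rw [map_neg, neg_div, num_div_denom]⟩
  refine stableF_of_denom_dvd_mul hf hf ?_ (dvd_mul_of_dvd_left hd _)
  rw [Valuation.map_neg]
  exact inftyValuation_le_one_iff.mpr hf.1

/-- The ring `𝔸` of stable rational functions. -/
def stableSubring (Ω : Set ℂ) : Subring F where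
  carrier := {f | StableF Ω f}
  zero_mem' := ⟨by simp, by simp⟩
  one_mem' := ⟨by simp, by simp⟩
  add_mem' := StableF.add
  mul_mem' := StableF.mul
  neg_mem' := StableF.neg

end Properness

namespace MatStable

variable {Ω : Set ℂ} {a b c : Type}

theorem properM {A : Matrix a b F} (hA : MatStable Ω A) : ProperM A := fun i j => (hA i j).1

theorem add {A B : Matrix a b F} (hA : MatStable Ω A) (hB : MatStable Ω B) :
    MatStable Ω (A + B) := fun i j => (stableSubring Ω).add_mem (hA i j) (hB i j)

theorem sub {A B : Matrix a b F} (hA : MatStable Ω A) (hB : MatStable Ω B) :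
    MatStable Ω (A - B) := fun i j => (stableSubring Ω).sub_mem (hA i j) (hB i j)

theorem mul [Fintype b] {A : Matrix a b F} {B : Matrix b c F} (hA : MatStable Ω A)
    (hB : MatStable Ω B) : MatStable Ω (A * B) := fun i j =>
  (stableSubring Ω).sum_mem fun k _ => (stableSubring Ω).mul_mem (hA i k) (hB k j)

theorem one [DecidableEq a] : MatStable Ω (1 : Matrix a a F) := fun i j => by
  rw [Matrix.one_apply]
  split_ifs
  exacts [(stableSubring Ω).one_mem, (stableSubring Ω).zero_mem]

end MatStable

section ClosedLoop

variable {R ι κ : Type*} [CommRing R] [Fintype ι] [Fintype κ] [DecidableEq κ]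
  {G : Matrix κ ι R} {K : Matrix ι κ R}

theorem Matrix.mul_mul_inv_one_add_mul (h : IsUnit (1 + G * K).det) :
    G * (K * (1 + G * K)⁻¹) = 1 - (1 + G * K)⁻¹ := by
  rw [eq_sub_iff_add_eq, ← Matrix.mul_assoc, ← add_one_mul, add_comm,
    Matrix.mul_nonsing_inv _ h]

theorem Matrix.mul_inv_one_add_mul_comm [DecidableEq ι] (h : IsUnit (1 + G * K).det) :
    K * (1 + G * K)⁻¹ = (1 + K * G)⁻¹ * K := by
  have h' : IsUnit (1 + K * G).det := by rwa [det_one_add_mul_comm]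
  have hcomm : (1 + K * G) * K = K * (1 + G * K) := by
    rw [Matrix.add_mul, Matrix.mul_add, Matrix.one_mul, Matrix.mul_one, Matrix.mul_assoc]
  calc K * (1 + G * K)⁻¹ = (1 + K * G)⁻¹ * ((1 + K * G) * K) * (1 + G * K)⁻¹ := by
        rw [Matrix.nonsing_inv_mul_cancel_left _ _ h']
    _ = (1 + K * G)⁻¹ * K := by
        rw [hcomm, ← Matrix.mul_assoc, Matrix.mul_nonsing_inv_cancel_right _ _ h]

end ClosedLoop

section QuadraticInvariance

open Polynomial

variable {𝕜 ι κ : Type*} [Field 𝕜]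

theorem Matrix.nonsing_inv_mem_adjoin [Fintype ι] [DecidableEq ι] (A : Matrix ι ι 𝕜) :
    A⁻¹ ∈ Algebra.adjoin 𝕜 {A} := by
  by_cases hA : IsUnit A.det
  swap
  · rw [A.nonsing_inv_apply_not_isUnit hA]
    exact Subalgebra.zero_mem _
  set B := Algebra.adjoin 𝕜 {A}
  let a : B := ⟨A, Algebra.self_mem_adjoin_singleton 𝕜 A⟩
  have hint : IsIntegral 𝕜 a :=
    (isIntegral_algHom_iff B.val Subtype.val_injective).mp (Algebra.IsIntegral.isIntegral A)
  have hreg : a ∈ nonZeroDivisors B := comap_nonZeroDivisors_le_of_injective (f := B.val)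
    Subtype.val_injective ((A.isUnit_iff_isUnit_det.mpr hA).mem_nonZeroDivisors)
  obtain ⟨u, hu⟩ := IsArtinianRing.isUnit_of_isIntegral_of_nonZeroDivisor hint hreg
  have hinv : ((u⁻¹ : Bˣ) : Matrix ι ι 𝕜) = A⁻¹ :=
    (Matrix.inv_eq_left_inv (congrArg Subtype.val (hu ▸ u.inv_mul : (u⁻¹ : Bˣ) * a = 1))).symm
  exact hinv ▸ (u⁻¹ : Bˣ).val.2

def sparsitySubspace (R : Type*) [Semiring R] (Kbin : ι → κ → Bool) :
    Submodule R (Matrix ι κ R) where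
  carrier := {K | ∀ i j, Kbin i j = false → K i j = 0}
  add_mem' hK hL i j h := by rw [Matrix.add_apply, hK i j h, hL i j h, add_zero]
  zero_mem' _ _ _ := rfl
  smul_mem' c _ hK i j h := by rw [Matrix.smul_apply, hK i j h, smul_zero]

variable [Fintype ι] [Fintype κ]

def QuadraticallyInvariant (S : Submodule 𝕜 (Matrix ι κ 𝕜)) (G : Matrix κ ι 𝕜) :
    Prop :=
  ∀ K ∈ S, K * G * K ∈ S

namespace QuadraticallyInvariant

variable {S : Submodule 𝕜 (Matrix ι κ 𝕜)} {G : Matrix κ ι 𝕜} {K : Matrix ι κ 𝕜}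

theorem neg (hS : QuadraticallyInvariant S G) : QuadraticallyInvariant S (-G) := fun K hK => by
  simpa only [Matrix.mul_neg, Matrix.neg_mul, neg_neg] using S.neg_mem (hS K hK)

variable [DecidableEq κ]

theorem mul_pow_mem [NeZero (2 : 𝕜)] (hS : QuadraticallyInvariant S G) (hK : K ∈ S) (k : ℕ) :
    K * (G * K) ^ k ∈ S := by
  induction k with
  | zero => simpa using hK
  | succ k ih =>
    set T := K * (G * K) ^ k
    have hKGT : K * G * T = K * (G * K) ^ (k + 1) := by
      simp only [T, pow_succ', ← Matrix.mul_assoc]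
    have hTGK : T * G * K = K * (G * K) ^ (k + 1) := by
      simp only [T, pow_succ, ← Matrix.mul_assoc]
    have hpolar : (K + T) * G * (K + T) - K * G * K - T * G * T =
        (2 : 𝕜) • (K * (G * K) ^ (k + 1)) := by
      rw [Matrix.add_mul, Matrix.add_mul, Matrix.mul_add, Matrix.mul_add, hKGT, hTGK, two_smul]
      abel
    have hmem : (2 : 𝕜) • (K * (G * K) ^ (k + 1)) ∈ S :=
      hpolar ▸ S.sub_mem (S.sub_mem (hS _ (S.add_mem hK ih)) (hS K hK)) (hS T ih)
    exact (S.smul_mem_iff two_ne_zero).mp hmem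

theorem mul_aeval_mem [NeZero (2 : 𝕜)] (hS : QuadraticallyInvariant S G) (hK : K ∈ S)
    (q : 𝕜[X]) : K * aeval (G * K) q ∈ S := by
  rw [aeval_eq_sum_range, Matrix.mul_sum]
  exact S.sum_mem fun k _ => by
    rw [Matrix.mul_smul]
    exact S.smul_mem _ (hS.mul_pow_mem hK k)

theorem mul_inv_one_add_mul_mem [NeZero (2 : 𝕜)] (hS : QuadraticallyInvariant S G)
    (hK : K ∈ S) : K * (1 + G * K)⁻¹ ∈ S := by
  have hle : Algebra.adjoin 𝕜 {1 + G * K} ≤ Algebra.adjoin 𝕜 {G * K} :=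
    Algebra.adjoin_le (Set.singleton_subset_iff.mpr
      (add_mem (Subalgebra.one_mem _) (Algebra.self_mem_adjoin_singleton 𝕜 _)))
  obtain ⟨q, hq⟩ : (1 + G * K)⁻¹ ∈ (aeval (G * K)).range :=
    Algebra.adjoin_singleton_eq_range_aeval 𝕜 (G * K) ▸ hle (Matrix.nonsing_inv_mem_adjoin _)
  rw [← hq]
  exact hS.mul_aeval_mem hK q

theorem mul_inv_one_add_mul_mem_iff [NeZero (2 : 𝕜)] (hS : QuadraticallyInvariant S G)
    (h : IsUnit (1 + G * K).det) : K * (1 + G * K)⁻¹ ∈ S ↔ K ∈ S := by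
  refine ⟨fun hK' => ?_, hS.mul_inv_one_add_mul_mem⟩
  have hK : K = K * (1 + G * K)⁻¹ * (1 + -G * (K * (1 + G * K)⁻¹))⁻¹ := by
    rw [Matrix.neg_mul, ← sub_eq_add_neg, Matrix.mul_mul_inv_one_add_mul h, sub_sub_cancel,
      Matrix.nonsing_inv_nonsing_inv _ h, Matrix.mul_assoc, Matrix.nonsing_inv_mul _ h,
      Matrix.mul_one]
  rw [hK]
  exact hS.neg.mul_inv_one_add_mul_mem hK'

end QuadraticallyInvariant

end QuadraticInvariance

section Bezout

variable {R ι κ : Type*} [CommRing R] [Fintype ι] [Fintype κ] [DecidableEq ι] [DecidableEq κ]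
  {Y M : Matrix ι ι R} {X Xt : Matrix ι κ R} {N Nt : Matrix κ ι R} {Mt Yt : Matrix κ κ R}

theorem bezout_identities (h : fromBlocks Y X (-Nt) Mt * fromBlocks M (-Xt) N Yt = 1) :
    Y * M + X * N = 1 ∧ X * Yt = Y * Xt ∧ Mt * N = Nt * M ∧ Nt * Xt + Mt * Yt = 1 ∧
    M * Y + Xt * Nt = 1 ∧ M * X = Xt * Mt ∧ N * Y = Yt * Nt ∧ N * X + Yt * Mt = 1 := by
  have h' : fromBlocks M (-Xt) N Yt * fromBlocks Y X (-Nt) Mt = 1 := mul_eq_one_comm.mp h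
  rw [fromBlocks_multiply, ← fromBlocks_one, fromBlocks_inj] at h h'
  obtain ⟨h11, h12, h21, h22⟩ := h
  obtain ⟨g11, g12, g21, g22⟩ := h'
  refine ⟨h11, ?_, ?_, ?_, ?_, ?_, ?_, g22⟩
  · rw [Matrix.mul_neg, neg_add_eq_zero] at h12; exact h12.symm
  · rw [Matrix.neg_mul, neg_add_eq_zero] at h21; exact h21.symm
  · rwa [Matrix.neg_mul, Matrix.mul_neg, neg_neg] at h22
  · rwa [Matrix.neg_mul, Matrix.mul_neg, neg_neg] at g11
  · rwa [Matrix.neg_mul, add_neg_eq_zero] at g12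
  · rwa [Matrix.mul_neg, add_neg_eq_zero] at g21

/-- The Bezout identity survives the Youla substitution `X ↦ X + Q M̃`, `Y ↦ Y - Q Ñ`,
`X̃ ↦ X̃ + M Q`, `Ỹ ↦ Ỹ - N Q`, because the two block factors change by the mutually
inverse unipotent matrices `[[1, Q], [0, 1]]` and `[[1, -Q], [0, 1]]`. -/
theorem bezout_youla (h : fromBlocks Y X (-Nt) Mt * fromBlocks M (-Xt) N Yt = 1)
    (Q : Matrix ι κ R) :
    fromBlocks (Y - Q * Nt) (X + Q * Mt) (-Nt) Mt *
      fromBlocks M (-(Xt + M * Q)) N (Yt - N * Q) = 1 := by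
  have hl : fromBlocks 1 Q 0 1 * fromBlocks Y X (-Nt) Mt =
      fromBlocks (Y - Q * Nt) (X + Q * Mt) (-Nt) Mt := by
    rw [fromBlocks_multiply]
    congr 1 <;> simp [Matrix.mul_neg, sub_eq_add_neg]
  have hr : fromBlocks M (-Xt) N Yt * fromBlocks 1 (-Q) 0 1 =
      fromBlocks M (-(Xt + M * Q)) N (Yt - N * Q) := by
    rw [fromBlocks_multiply]
    congr 1 <;> simp [Matrix.mul_neg, sub_eq_add_neg, add_comm]
  rw [← hl, ← hr, Matrix.mul_assoc, ← Matrix.mul_assoc (fromBlocks Y X (-Nt) Mt), h,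
    Matrix.one_mul, fromBlocks_multiply, ← fromBlocks_one]
  congr 1 <;> simp

end Bezout

namespace IsDCF

variable {Ω : Set ℂ} {m p : ℕ} {G : Matrix (Fin m) (Fin p) F}
  {M : Matrix (Fin p) (Fin p) F} {N : Matrix (Fin m) (Fin p) F}
  {Mt : Matrix (Fin m) (Fin m) F} {Nt : Matrix (Fin m) (Fin p) F}
  {X : Matrix (Fin p) (Fin m) F} {Y : Matrix (Fin p) (Fin p) F}
  {Xt : Matrix (Fin p) (Fin m) F} {Yt : Matrix (Fin m) (Fin m) F}

theorem youla (hD : IsDCF Ω G M N Mt Nt X Y Xt Yt) {Q : Matrix (Fin p) (Fin m) F}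
    (hQ : MatStable Ω Q) :
    IsDCF Ω G M N Mt Nt (X + Q * Mt) (Y - Q * Nt) (Xt + M * Q) (Yt - N * Q) :=
  { hD with
    stX := hD.stX.add (hQ.mul hD.stMt)
    stY := hD.stY.sub (hQ.mul hD.stNt)
    stXt := hD.stXt.add (hD.stM.mul hQ)
    stYt := hD.stYt.sub (hD.stN.mul hQ)
    bezout := bezout_youla hD.bezout Q }

theorem mul_M (hD : IsDCF Ω G M N Mt Nt X Y Xt Yt) : G * M = N := by
  rw [hD.hRight, Matrix.nonsing_inv_mul_cancel_right _ _ hD.hM]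

theorem Mt_mul (hD : IsDCF Ω G M N Mt Nt X Y Xt Yt) : Mt * G = Nt := by
  rw [hD.hLeft, Matrix.mul_nonsing_inv_cancel_left _ _ hD.hMt]

theorem inv_Mt (hD : IsDCF Ω G M N Mt Nt X Y Xt Yt) : Mt⁻¹ = G * Xt + Yt := by
  refine Matrix.inv_eq_right_inv ?_
  rw [Matrix.mul_add, ← Matrix.mul_assoc, hD.Mt_mul]
  exact (bezout_identities hD.bezout).2.2.2.1

theorem isUnit_det_Y (hD : IsDCF Ω G M N Mt Nt X Y Xt Yt) (hG : StrictlyProper G) :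
    IsUnit Y.det := by
  have hXN : StrictlyProper (X * N) :=
    hD.stX.properM.mul_strictlyProper (hD.mul_M ▸ hG.mul_properM hD.stM.properM)
  have hdet : Y.det * M.det = (1 - X * N).det := by
    rw [← det_mul, ← (bezout_identities hD.bezout).1, add_sub_cancel_right]
  exact isUnit_iff_ne_zero.mpr (left_ne_zero_of_mul (hdet ▸ hXN.det_one_sub_ne_zero))

theorem isUnit_det_Yt (hD : IsDCF Ω G M N Mt Nt X Y Xt Yt) (hG : StrictlyProper G) :
    IsUnit Yt.det := by
  have hNtXt : StrictlyProper (Nt * Xt) :=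
    (hD.Mt_mul ▸ hD.stMt.properM.mul_strictlyProper hG).mul_properM hD.stXt.properM
  have hdet : Mt.det * Yt.det = (1 - Nt * Xt).det := by
    rw [← det_mul, ← (bezout_identities hD.bezout).2.2.2.1, add_sub_cancel_left]
  exact isUnit_iff_ne_zero.mpr (right_ne_zero_of_mul (hdet ▸ hNtXt.det_one_sub_ne_zero))

theorem controller_eq (hD : IsDCF Ω G M N Mt Nt X Y Xt Yt) (hG : StrictlyProper G) :
    Y⁻¹ * X = Xt * Yt⁻¹ := by
  calc Y⁻¹ * X = Y⁻¹ * (X * Yt) * Yt⁻¹ := by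
        rw [Matrix.mul_assoc, Matrix.mul_nonsing_inv_cancel_right _ _ (hD.isUnit_det_Yt hG)]
    _ = Xt * Yt⁻¹ := by
        rw [(bezout_identities hD.bezout).2.1,
          Matrix.nonsing_inv_mul_cancel_left _ _ (hD.isUnit_det_Y hG)]

theorem one_add_mul_controller_mul (hD : IsDCF Ω G M N Mt Nt X Y Xt Yt)
    (hG : StrictlyProper G) : (1 + G * (Y⁻¹ * X)) * (Yt * Mt) = 1 := by
  have hNtXt : Nt * Xt = 1 - Mt * Yt := eq_sub_of_add_eq (bezout_identities hD.bezout).2.2.2.1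
  have hGXt : G * Xt * Mt = 1 - Yt * Mt := by
    rw [hD.hLeft, Matrix.mul_assoc Mt⁻¹, hNtXt, Matrix.mul_sub, Matrix.mul_one,
      Matrix.nonsing_inv_mul_cancel_left _ _ hD.hMt, Matrix.sub_mul,
      Matrix.nonsing_inv_mul _ hD.hMt]
  rw [hD.controller_eq hG, Matrix.add_mul, Matrix.one_mul, Matrix.mul_assoc, Matrix.mul_assoc,
    ← Matrix.mul_assoc Yt⁻¹, Matrix.nonsing_inv_mul _ (hD.isUnit_det_Yt hG), Matrix.one_mul,
    ← Matrix.mul_assoc, hGXt, add_sub_cancel]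

theorem one_add_controller_mul_mul (hD : IsDCF Ω G M N Mt Nt X Y Xt Yt)
    (hG : StrictlyProper G) : (1 + Y⁻¹ * X * G) * (M * Y) = 1 := by
  obtain ⟨-, hXYt, -, -, hMY, -, hNY, -⟩ := bezout_identities hD.bezout
  rw [Matrix.add_mul, Matrix.one_mul, Matrix.mul_assoc, Matrix.mul_assoc, ← Matrix.mul_assoc G,
    hD.mul_M, hNY, ← Matrix.mul_assoc X, hXYt, Matrix.mul_assoc,
    Matrix.nonsing_inv_mul_cancel_left _ _ (hD.isUnit_det_Y hG), hMY]

theorem mul_inv_one_add_mul (hD : IsDCF Ω G M N Mt Nt X Y Xt Yt) (hG : StrictlyProper G) :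
    Y⁻¹ * X * (1 + G * (Y⁻¹ * X))⁻¹ = Xt * Mt := by
  rw [Matrix.inv_eq_right_inv (hD.one_add_mul_controller_mul hG), hD.controller_eq hG,
    Matrix.mul_assoc, Matrix.nonsing_inv_mul_cancel_left _ _ (hD.isUnit_det_Yt hG)]

theorem stabilizes (hD : IsDCF Ω G M N Mt Nt X Y Xt Yt) (hG : StrictlyProper G) :
    Stabilizes Ω G (Y⁻¹ * X) := by
  have hS := hD.one_add_mul_controller_mul hG
  refine ⟨Matrix.isUnit_det_of_right_inverse hS, ?_, ?_, ?_, ?_⟩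
  · rw [Matrix.inv_eq_right_inv hS]
    exact hD.stYt.mul hD.stMt
  · rw [Matrix.inv_eq_right_inv hS, Matrix.mul_assoc, hD.Mt_mul]
    exact hD.stYt.mul hD.stNt
  · rw [hD.mul_inv_one_add_mul hG]
    exact hD.stXt.mul hD.stMt
  · rw [Matrix.inv_eq_right_inv (hD.one_add_controller_mul_mul hG)]
    exact hD.stM.mul hD.stY

/-- The Youla parameter of `K` is `Q = (Y K - X) (1 + G K)⁻¹ M̃⁻¹`. -/
theorem exists_youla_of_stabilizes (hD : IsDCF Ω G M N Mt Nt X Y Xt Yt)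
    {K : Matrix (Fin p) (Fin m) F} (hK : Stabilizes Ω G K) :
    ∃ Q : Matrix (Fin p) (Fin m) F,
      MatStable Ω Q ∧ Xt * Mt + M * Q * Mt = K * (1 + G * K)⁻¹ := by
  obtain ⟨hdet, hH, hHG, hKH, hKG⟩ := hK
  obtain ⟨-, -, -, -, hMY, hMX, -, -⟩ := bezout_identities hD.bezout
  have hdet' : IsUnit (1 + K * G).det := by rwa [det_one_add_mul_comm]
  have hKHG : K * (1 + G * K)⁻¹ * G = 1 - (1 + K * G)⁻¹ := by
    rw [Matrix.mul_assoc, ← Matrix.mul_inv_one_add_mul_comm hdet',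
      Matrix.mul_mul_inv_one_add_mul hdet']
  have hGKH := Matrix.mul_mul_inv_one_add_mul hdet
  set H := (1 + G * K)⁻¹
  set Q := (Y * K - X) * H * Mt⁻¹
  have hQMt : Q * Mt = (Y * K - X) * H := Matrix.nonsing_inv_mul_cancel_right _ _ hD.hMt
  refine ⟨Q, ?_, ?_⟩
  · have hQ : Q = (Y * (K * H * G) - X * (H * G)) * Xt + (Y * (K * H) - X * H) * Yt := by
      simp only [Q, hD.inv_Mt, Matrix.sub_mul, Matrix.mul_add, Matrix.mul_assoc]
    rw [hQ, hKHG]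
    exact (((hD.stY.mul (MatStable.one.sub hKG)).sub (hD.stX.mul hHG)).mul hD.stXt).add
      (((hD.stY.mul hKH).sub (hD.stX.mul hH)).mul hD.stYt)
  · calc Xt * Mt + M * Q * Mt = Xt * Mt * (1 - H) + M * Y * (K * H) := by
          rw [Matrix.mul_assoc M, hQMt]
          simp only [Matrix.mul_sub, Matrix.sub_mul, ← hMX, Matrix.mul_assoc, Matrix.mul_one]
          abel
      _ = (M * Y + Xt * Nt) * (K * H) := by
          rw [← hGKH, ← hD.Mt_mul]
          simp only [Matrix.add_mul, Matrix.mul_assoc]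
          abel
      _ = K * H := by rw [hMY, Matrix.one_mul]

end IsDCF

/-- **Theorem 4.** Given a DCF of the strictly proper plant `G` and a QI sparsity subspace `S`,
there exists a stabilizing controller in `S` iff the exact model-matching problem
`(X̃·M̃ + M·Q·M̃) i j = 0` (for all `(i,j)` with `Kbin i j = false`) has a stable solution `Q`;
moreover for any such `Q`, the controller `K_Q` lies in `S` and stabilizes `G`. -/
theorem stabilizability_iff_model_matching (Ω : Set ℂ) (m p : ℕ)
    (G : Matrix (Fin m) (Fin p) F) (hG : StrictlyProper G)
    (M : Matrix (Fin p) (Fin p) F) (N : Matrix (Fin m) (Fin p) F)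
    (Mt : Matrix (Fin m) (Fin m) F) (Nt : Matrix (Fin m) (Fin p) F)
    (X : Matrix (Fin p) (Fin m) F) (Y : Matrix (Fin p) (Fin p) F)
    (Xt : Matrix (Fin p) (Fin m) F) (Yt : Matrix (Fin m) (Fin m) F)
    (hDCF : IsDCF Ω G M N Mt Nt X Y Xt Yt)
    (Kbin : Fin p → Fin m → Bool)
    (hQI : ∀ K : Matrix (Fin p) (Fin m) F,
      (∀ i j, Kbin i j = false → K i j = 0) →
      (∀ i j, Kbin i j = false → (K * G * K) i j = 0)) :
    ((∃ K : Matrix (Fin p) (Fin m) F,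
        (∀ i j, Kbin i j = false → K i j = 0) ∧ Stabilizes Ω G K) ↔
      (∃ Q : Matrix (Fin p) (Fin m) F, MatStable Ω Q ∧
        ∀ i j, Kbin i j = false → (Xt * Mt + M * Q * Mt) i j = 0)) ∧
    (∀ Q : Matrix (Fin p) (Fin m) F, MatStable Ω Q →
      (∀ i j, Kbin i j = false → (Xt * Mt + M * Q * Mt) i j = 0) →
      (∀ i j, Kbin i j = false → ((Y - Q * Nt)⁻¹ * (X + Q * Mt)) i j = 0) ∧
      Stabilizes Ω G ((Y - Q * Nt)⁻¹ * (X + Q * Mt))) := by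
  have hS : QuadraticallyInvariant (sparsitySubspace F Kbin) G := hQI
  have hYoula : ∀ Q : Matrix (Fin p) (Fin m) F, MatStable Ω Q →
      (∀ i j, Kbin i j = false → (Xt * Mt + M * Q * Mt) i j = 0) →
      (∀ i j, Kbin i j = false → ((Y - Q * Nt)⁻¹ * (X + Q * Mt)) i j = 0) ∧
      Stabilizes Ω G ((Y - Q * Nt)⁻¹ * (X + Q * Mt)) := by
    intro Q hQ hmatch
    have hDQ := hDCF.youla hQ
    have hstab := hDQ.stabilizes hG
    refine ⟨(hS.mul_inv_one_add_mul_mem_iff hstab.1).mp ?_, hstab⟩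
    rw [hDQ.mul_inv_one_add_mul hG, Matrix.add_mul]
    exact hmatch
  refine ⟨⟨?_, ?_⟩, hYoula⟩
  · rintro ⟨K, hKS, hK⟩
    obtain ⟨Q, hQ, hmatch⟩ := hDCF.exists_youla_of_stabilizes hK
    refine ⟨Q, hQ, ?_⟩
    rw [hmatch]
    exact hS.mul_inv_one_add_mul_mem hKS
  · rintro ⟨Q, hQ, hmatch⟩
    exact ⟨_, hYoula Q hQ hmatch⟩
end
end

section
/- (Affine closed-loop formula.) Let (M, N, M̃, Ñ, X, Y, X̃, Ỹ) be a DCF of the strictly proper plant G ∈ F^{m×p} over Ω, and let Q ∈ 𝔸^{p×m} be stable. Then I + G·K_Q is invertible over F and the four closed-loop transfer matrices are given by: (I+GK_Q)⁻¹ = Ỹ_Q·M̃, (I+GK_Q)⁻¹·G = Ỹ_Q·Ñ, K_Q·(I+GK_Q)⁻¹ = X̃_Q·M̃, and (I+K_Q·G)⁻¹ = I − X̃_Q·Ñ. Moreover Ỹ·M̃ = I − N·X, Ỹ·Ñ = N·Y, X̃·M̃ = M·X, and I − X̃·Ñ = M·Y, so each closed-loop block is an affine function of Q with stable coefficients. 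-/
open Matrix

noncomputable section

/-!
Proper rational functions form the valuation ring of the place at infinity of `ℝ(λ)`, a local
ring whose maximal ideal consists of the strictly proper functions. The Youla shift by `Q`
multiplies the two Bézout factors by the mutually inverse unipotent matrices `[[1, Q], [0, 1]]`
and `[[1, -Q], [0, 1]]`, so the shifted factors again satisfy the Bézout identity. Its `(1,1)`
block `Y_Q M + X_Q N = 1` reduces modulo the maximal ideal to `Ȳ_Q M̄ = 1`, since `N = G M` is
strictly proper; hence `det Y_Q` is a unit and `K_Q` is defined. The closed-loop formulas are then
block identities of the shifted Bézout identity combined with `M̃ G = Ñ`.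
-/

namespace Valuation

variable {R K Γ : Type*} [LinearOrderedCommGroupWithZero Γ]

theorem matrix_mul_apply_le_one [Ring R] (v : Valuation R Γ) {l n o : Type*} [Fintype n]
    {A : Matrix l n R} {B : Matrix n o R} (hA : ∀ i j, v (A i j) ≤ 1)
    (hB : ∀ i j, v (B i j) ≤ 1) (i : l) (j : o) : v ((A * B) i j) ≤ 1 :=
  v.map_sum_le fun k _ => by rw [v.map_mul]; exact mul_le_one' (hA i k) (hB k j)

theorem matrix_mul_apply_lt_one [Ring R] (v : Valuation R Γ) {l n o : Type*} [Fintype n]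
    {A : Matrix l n R} {B : Matrix n o R} (hA : ∀ i j, v (A i j) < 1)
    (hB : ∀ i j, v (B i j) ≤ 1) (i : l) (j : o) : v ((A * B) i j) < 1 :=
  v.map_sum_lt one_ne_zero fun k _ => by
    rw [v.map_mul]; exact mul_lt_one_of_nonneg_of_lt_one_left zero_le (hA i k) (hB k j)

theorem isUnit_det_of_mul_add_mul_eq_one [Field K] (v : Valuation K Γ) {n m : Type*} [Fintype n]
    [DecidableEq n] [Fintype m] {A B : Matrix n n K} {C : Matrix n m K} {N : Matrix m n K}
    (hA : ∀ i j, v (A i j) ≤ 1) (hB : ∀ i j, v (B i j) ≤ 1) (hC : ∀ i j, v (C i j) ≤ 1)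
    (hN : ∀ i j, v (N i j) < 1) (h : A * B + C * N = 1) : IsUnit A.det := by
  let O := v.valuationSubring
  let π := IsLocalRing.residue O
  let A' : Matrix n n O := .of fun i j => ⟨A i j, hA i j⟩
  let B' : Matrix n n O := .of fun i j => ⟨B i j, hB i j⟩
  let C' : Matrix n m O := .of fun i j => ⟨C i j, hC i j⟩
  let N' : Matrix m n O := .of fun i j => ⟨N i j, (hN i j).le⟩
  have h' : A' * B' + C' * N' = 1 := Matrix.map_injective Subtype.val_injective <| by
    change (A' * B' + C' * N').map O.subtype = (1 : Matrix n n O).map O.subtype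
    rw [Matrix.map_add _ (map_add _), Matrix.map_mul, Matrix.map_mul,
      Matrix.map_one _ (map_zero _) (map_one _)]
    exact h
  have hN' : N'.map π = 0 := by
    ext i j
    exact (IsLocalRing.residue_eq_zero_iff _).mpr (v.mem_maximalIdeal_iff.mpr (hN i j))
  have hres : A'.map π * B'.map π = 1 := by
    simpa [Matrix.map_add, Matrix.map_mul, hN'] using congr_arg (Matrix.map · π) h'
  have hA' : IsUnit A'.det := by
    rw [← isUnit_map_iff π, RingHom.map_det]
    exact Matrix.isUnit_det_of_right_inverse hres
  have := hA'.map O.subtype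
  rwa [RingHom.map_det] at this

end Valuation

namespace RatFunc

variable {K : Type*} [Field K] [DecidableEq (RatFunc K)]

theorem inftyValuation_le_one_iff_s9 {f : RatFunc K} : inftyValuation K f ≤ 1 ↔ f.intDegree ≤ 0 := by
  by_cases hf : f = 0
  · simp [hf]
  · rw [inftyValuation_apply, inftyValuation_of_nonzero K hf, ← WithZero.exp_zero,
      WithZero.exp_le_exp]

theorem inftyValuation_lt_one_iff_s9 {f : RatFunc K} :
    inftyValuation K f < 1 ↔ f = 0 ∨ f.intDegree < 0 := by
  by_cases hf : f = 0
  · simp [hf]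
  · rw [inftyValuation_apply, inftyValuation_of_nonzero K hf, ← WithZero.exp_zero,
      WithZero.exp_lt_exp]
    simp [hf]

end RatFunc

section Bezout

variable {R : Type*} [CommRing R] {m p : Type*} [Fintype m] [Fintype p] [DecidableEq m]
  [DecidableEq p] {M Y : Matrix p p R} {N Nt : Matrix m p R} {Mt Yt : Matrix m m R}
  {X Xt : Matrix p m R}

theorem bezout_youla_shift (h : fromBlocks Y X (-Nt) Mt * fromBlocks M (-Xt) N Yt = 1)
    (Q : Matrix p m R) :
    fromBlocks (Y - Q * Nt) (X + Q * Mt) (-Nt) Mt *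
      fromBlocks M (-(Xt + M * Q)) N (Yt - N * Q) = 1 := by
  have hL : fromBlocks (Y - Q * Nt) (X + Q * Mt) (-Nt) Mt =
      fromBlocks 1 Q 0 1 * fromBlocks Y X (-Nt) Mt := by
    simp [fromBlocks_multiply, sub_eq_add_neg]
  have hR : fromBlocks M (-(Xt + M * Q)) N (Yt - N * Q) =
      fromBlocks M (-Xt) N Yt * fromBlocks 1 (-Q) 0 1 := by
    simp [fromBlocks_multiply, sub_eq_add_neg, add_comm]
  have hQ : (fromBlocks 1 Q 0 1 : Matrix (p ⊕ m) (p ⊕ m) R) * fromBlocks 1 (-Q) 0 1 = 1 := by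
    simp [fromBlocks_multiply]
  rw [hL, hR, Matrix.mul_assoc, ← Matrix.mul_assoc (fromBlocks Y X _ _), h, Matrix.one_mul, hQ]

theorem bezout_left_blocks (h : fromBlocks Y X (-Nt) Mt * fromBlocks M (-Xt) N Yt = 1) :
    Y * M + X * N = 1 ∧ X * Yt = Y * Xt := by
  rw [fromBlocks_multiply, ← fromBlocks_one] at h
  obtain ⟨h11, h12, -, -⟩ := fromBlocks_inj.mp h
  refine ⟨h11, ?_⟩
  rw [Matrix.mul_neg, neg_add_eq_zero] at h12
  exact h12.symm

theorem bezout_right_blocks (h : fromBlocks Y X (-Nt) Mt * fromBlocks M (-Xt) N Yt = 1) :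
    M * Y + Xt * Nt = 1 ∧ M * X = Xt * Mt ∧ N * Y = Yt * Nt ∧ N * X + Yt * Mt = 1 := by
  have h' := mul_eq_one_comm.mp h
  rw [fromBlocks_multiply, ← fromBlocks_one] at h'
  obtain ⟨h11, h12, h21, h22⟩ := fromBlocks_inj.mp h'
  simp only [Matrix.neg_mul, Matrix.mul_neg, neg_neg, ← sub_eq_add_neg, sub_eq_zero] at h11 h12 h21
  exact ⟨h11, h12, h21, h22⟩

theorem closed_loop_of_bezout (G : Matrix m p R)
    (h : fromBlocks Y X (-Nt) Mt * fromBlocks M (-Xt) N Yt = 1) (hNt : Nt = Mt * G)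
    (hY : IsUnit Y.det) :
    IsUnit (1 + G * (Y⁻¹ * X)).det ∧
    (1 + G * (Y⁻¹ * X))⁻¹ = Yt * Mt ∧
    (1 + G * (Y⁻¹ * X))⁻¹ * G = Yt * Nt ∧
    (Y⁻¹ * X) * (1 + G * (Y⁻¹ * X))⁻¹ = Xt * Mt ∧
    (1 + (Y⁻¹ * X) * G)⁻¹ = 1 - Xt * Nt := by
  obtain ⟨-, hXYt⟩ := bezout_left_blocks h
  obtain ⟨h11, h12, h21, h22⟩ := bezout_right_blocks h
  have hYK : Y * (Y⁻¹ * X) = X := by rw [← Matrix.mul_assoc, mul_nonsing_inv _ hY, Matrix.one_mul]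
  have hS : (Yt * Mt) * (1 + G * (Y⁻¹ * X)) = 1 := calc
    _ = Yt * Mt + (Yt * (Mt * G)) * (Y⁻¹ * X) := by
      simp only [Matrix.mul_add, Matrix.mul_one, Matrix.mul_assoc]
    _ = Yt * Mt + N * (Y * (Y⁻¹ * X)) := by rw [← hNt, ← h21, Matrix.mul_assoc]
    _ = 1 := by rw [hYK, add_comm, h22]
  have hT : (M * Y) * (1 + (Y⁻¹ * X) * G) = 1 := calc
    _ = M * Y + M * (Y * (Y⁻¹ * X)) * G := by
      simp only [Matrix.mul_add, Matrix.mul_one, Matrix.mul_assoc]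
    _ = M * Y + Xt * (Mt * G) := by rw [hYK, h12, Matrix.mul_assoc]
    _ = 1 := by rw [← hNt, h11]
  have hinv := inv_eq_left_inv hS
  refine ⟨isUnit_det_of_left_inverse hS, hinv, by rw [hinv, hNt, Matrix.mul_assoc], ?_, ?_⟩
  · calc (Y⁻¹ * X) * (1 + G * (Y⁻¹ * X))⁻¹ = Y⁻¹ * (X * Yt) * Mt := by
          simp only [hinv, Matrix.mul_assoc]
      _ = Xt * Mt := by
          rw [hXYt, ← Matrix.mul_assoc, nonsing_inv_mul _ hY, Matrix.one_mul]
  · rw [inv_eq_left_inv hT, ← h11]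
    abel

end Bezout

section Proper

variable [DecidableEq F] {a b : Type}

theorem MatStable.inftyValuation_le_one {Ω : Set ℂ} {A : Matrix a b F} (hA : MatStable Ω A)
    (i : a) (j : b) : RatFunc.inftyValuation ℝ (A i j) ≤ 1 :=
  RatFunc.inftyValuation_le_one_iff_s9.mpr (hA i j).1

theorem StrictlyProper.inftyValuation_lt_one {G : Matrix a b F} (hG : StrictlyProper G)
    (i : a) (j : b) : RatFunc.inftyValuation ℝ (G i j) < 1 :=
  RatFunc.inftyValuation_lt_one_iff_s9.mpr (hG i j)

end Proper

/-- **Affine closed-loop formula.** For a DCF of the strictly proper plant `G` and stable `Q`,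
the four closed-loop transfer matrices of `K_Q` are affine in `Q`:
`(I+GK_Q)⁻¹ = Ỹ_Q M̃`, `(I+GK_Q)⁻¹G = Ỹ_Q Ñ`, `K_Q(I+GK_Q)⁻¹ = X̃_Q M̃`,
`(I+K_Q G)⁻¹ = I − X̃_Q Ñ`, together with `Ỹ M̃ = I − N X`, `Ỹ Ñ = N Y`,
`X̃ M̃ = M X`, `I − X̃ Ñ = M Y`. -/
theorem affine_closed_loop (Ω : Set ℂ) (m p : ℕ)
    (G : Matrix (Fin m) (Fin p) F) (hG : StrictlyProper G)
    (M : Matrix (Fin p) (Fin p) F) (N : Matrix (Fin m) (Fin p) F)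
    (Mt : Matrix (Fin m) (Fin m) F) (Nt : Matrix (Fin m) (Fin p) F)
    (X : Matrix (Fin p) (Fin m) F) (Y : Matrix (Fin p) (Fin p) F)
    (Xt : Matrix (Fin p) (Fin m) F) (Yt : Matrix (Fin m) (Fin m) F)
    (hDCF : IsDCF Ω G M N Mt Nt X Y Xt Yt)
    (Q : Matrix (Fin p) (Fin m) F) (hQ : MatStable Ω Q) :
    IsUnit (1 + G * ((Y - Q * Nt)⁻¹ * (X + Q * Mt))).det ∧
    (1 + G * ((Y - Q * Nt)⁻¹ * (X + Q * Mt)))⁻¹ = (Yt - N * Q) * Mt ∧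
    (1 + G * ((Y - Q * Nt)⁻¹ * (X + Q * Mt)))⁻¹ * G = (Yt - N * Q) * Nt ∧
    ((Y - Q * Nt)⁻¹ * (X + Q * Mt)) *
        (1 + G * ((Y - Q * Nt)⁻¹ * (X + Q * Mt)))⁻¹ = (Xt + M * Q) * Mt ∧
    (1 + ((Y - Q * Nt)⁻¹ * (X + Q * Mt)) * G)⁻¹ = 1 - (Xt + M * Q) * Nt ∧
    Yt * Mt = 1 - N * X ∧ Yt * Nt = N * Y ∧ Xt * Mt = M * X ∧ 1 - Xt * Nt = M * Y := by
  classical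
  let v := RatFunc.inftyValuation ℝ
  have hNt : Nt = Mt * G := by
    rw [hDCF.hLeft, ← Matrix.mul_assoc, Matrix.mul_nonsing_inv _ hDCF.hMt, Matrix.one_mul]
  have hN : N = G * M := by
    rw [hDCF.hRight, Matrix.mul_assoc, Matrix.nonsing_inv_mul _ hDCF.hM, Matrix.mul_one]
  have hbezQ := bezout_youla_shift hDCF.bezout Q
  have hYQ : IsUnit (Y - Q * Nt).det := by
    refine v.isUnit_det_of_mul_add_mul_eq_one (fun i j => ?_) hDCF.stM.inftyValuation_le_one
      (fun i j => ?_) ?_ (bezout_left_blocks hbezQ).1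
    · exact v.map_sub_le (hDCF.stY.inftyValuation_le_one i j)
        (v.matrix_mul_apply_le_one hQ.inftyValuation_le_one hDCF.stNt.inftyValuation_le_one i j)
    · exact v.map_add_le (hDCF.stX.inftyValuation_le_one i j)
        (v.matrix_mul_apply_le_one hQ.inftyValuation_le_one hDCF.stMt.inftyValuation_le_one i j)
    · rw [hN]
      exact v.matrix_mul_apply_lt_one hG.inftyValuation_lt_one hDCF.stM.inftyValuation_le_one
  obtain ⟨h11, h12, h21, h22⟩ := bezout_right_blocks hDCF.bezout
  obtain ⟨hdet, hS, hSG, hKS, hSi⟩ := closed_loop_of_bezout G hbezQ hNt hYQ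
  exact ⟨hdet, hS, hSG, hKS, hSi, eq_sub_of_add_eq' h22, h21.symm, h12.symm,
    sub_eq_of_eq_add h11.symm⟩
end
end
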